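/- arXiv:1809.03257 — 2 statements merged into one kernel-verified Lean document; each statement's English description precedes it below -/
import Mathlib

section
/- Let u : ℤ^d_⋆ → ℝ satisfy Σ_{x ∈ ℤ^d} |u(x)| < ∞, u(−x) = u(x) for all x ∈ ℤ^d, and u(⋆) = u(0). Then: (i) ∫_Ω ω(⋆)₁ ψ(ω) dπ(ω) = u(0); (ii) ∫_Ω ψ(ω)² dπ(ω) = Σ_{x ∈ ℤ^d} u(x)² + u(0)²; (iii) ∫_Ω ψ(σ(τ_⋆ω)) ψ(ω) dπ(ω) = Σ_{x ∈ ℤ^d} u(x + e₁) u(x) + u(0)², which equals (Σ_{x ∈ ℤ^d} u(x)² + u(0)²) − ½ Σ_{x ∈ ℤ^d} (u(x + e₁) − u(x))². -/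
open MeasureTheory

noncomputable section

/-- Configurations on `ℤ^d_⋆ = ℤ^d ∪ {⋆}` (with `none = ⋆`) with values in `ℤ^d`;
here `Ω = {−e₁,+e₁}^{ℤ^d_⋆}` consists of those with values in `{−e₁,+e₁}`. -/
abbrev EnvF (d : ℕ) := Option (Fin d → ℤ) → (Fin d → ℤ)

/-- The hand-shift `τ_⋆`: `(τ_⋆ω)(x) = ω(x + ω(⋆))` for `x ∈ ℤ^d`, `(τ_⋆ω)(⋆) = ω(⋆)`. -/
def tauStar {d : ℕ} (ω : EnvF d) : EnvF d := fun z =>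
  match z with
  | none => ω none
  | some x => ω (some (x + ω none))

/-- The swap `σ`: `(σω)(0) = ω(⋆)`, `(σω)(⋆) = ω(0)`, `(σω)(x) = ω(x)` otherwise. -/
def swapMap {d : ℕ} (ω : EnvF d) : EnvF d := fun z =>
  match z with
  | none => ω (some 0)
  | some x => if x = 0 then ω none else ω (some x)

/-- The linear functional `ψ(ω) = Σ_{x ∈ ℤ^d} u(x) ω(x)₁ + u(⋆) ω(⋆)₁`. -/
def psiF {d : ℕ} [NeZero d] (u : Option (Fin d → ℤ) → ℝ) (ω : EnvF d) : ℝ :=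
  (∑' x : Fin d → ℤ, u (some x) * ((ω (some x)) 0 : ℝ)) + u none * ((ω none) 0 : ℝ)

/-- `π` is the product probability measure on `Ω = {−e₁,+e₁}^{ℤ^d_⋆}` under which the
coordinates are i.i.d. uniform on `{−e₁,+e₁}` (the measure `π_p` with `p₁ = 1`):
every cylinder event specifying the arrows at a finite set `S` of sites has
probability `(1/2)^{|S|}`. -/
def IsUniformProduct {d : ℕ} [NeZero d] (π : Measure (EnvF d)) : Prop :=
  IsProbabilityMeasure π ∧
  ∀ (S : Finset (Option (Fin d → ℤ))) (g : Option (Fin d → ℤ) → (Fin d → ℤ)),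
    (∀ z ∈ S, g z = Pi.single (0 : Fin d) (1 : ℤ) ∨ g z = Pi.single (0 : Fin d) (-1 : ℤ)) →
    π {ω : EnvF d | ∀ z ∈ S, ω z = g z} = (1 / 2) ^ S.card

set_option linter.unusedSectionVars false

namespace PsiAux
variable {d : ℕ} [NeZero d]

abbrev Idx (d : ℕ) := Option (Fin d → ℤ)

def E1 (d : ℕ) [NeZero d] : Fin d → ℤ := Pi.single 0 1

lemma E1_apply : E1 d 0 = 1 := Pi.single_eq_same _ _
lemma negE1_apply : (-E1 d) 0 = -1 := by simp [E1]
lemma E1_ne_neg : E1 d ≠ -E1 d := by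
  intro h
  have := congrFun h 0
  rw [E1_apply, negE1_apply] at this
  norm_num at this

lemma pm_iff (v : Fin d → ℤ) : (v = E1 d ∨ v = -E1 d) ↔
    (v = Pi.single (0 : Fin d) (1 : ℤ) ∨ v = Pi.single (0 : Fin d) (-1 : ℤ)) := by
  have : -E1 d = Pi.single (0 : Fin d) (-1 : ℤ) := by
    funext i; by_cases h : i = 0 <;> simp [E1, h, Pi.single_apply]
  rw [this]; rfl

def Cs (z : Idx d) (v : Fin d → ℤ) : Set (EnvF d) := {ω | ω z = v}

lemma measCs (z : Idx d) (v : Fin d → ℤ) : MeasurableSet (Cs z v) := by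
  have h : Cs z v = (fun ω : EnvF d => ω z) ⁻¹' {v} := rfl
  rw [h]
  exact measurable_pi_apply z (measurableSet_singleton v)

def GS (d : ℕ) [NeZero d] : Set (EnvF d) := {ω | ∀ z, ω z = E1 d ∨ ω z = -E1 d}

lemma measGS : MeasurableSet (GS d) := by
  have h : GS d = ⋂ z, (Cs z (E1 d) ∪ Cs z (-E1 d)) := by
    ext ω; simp [GS, Cs, Set.mem_iInter]
  rw [h]
  exact MeasurableSet.iInter fun z => (measCs _ _).union (measCs _ _)

variable {π : Measure (EnvF d)}

lemma cyl1 (hπ : IsUniformProduct π) {z : Idx d} {v : Fin d → ℤ}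
    (hv : v = E1 d ∨ v = -E1 d) : π (Cs z v) = 1 / 2 := by
  have h := hπ.2 {z} (fun _ => v) (fun t _ => (pm_iff v).1 hv)
  have hset : {ω : EnvF d | ∀ t ∈ ({z} : Finset (Idx d)), ω t = v} = Cs z v := by
    ext ω; simp [Cs]
  rw [hset] at h
  simpa using h

lemma cyl2 (hπ : IsUniformProduct π) {z w : Idx d} (hzw : z ≠ w) {vz vw : Fin d → ℤ}
    (hvz : vz = E1 d ∨ vz = -E1 d) (hvw : vw = E1 d ∨ vw = -E1 d) :
    π (Cs z vz ∩ Cs w vw) = 1 / 4 := by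
  classical
  set g : Idx d → (Fin d → ℤ) := Function.update (fun _ => vw) z vz with hg
  have hgz : g z = vz := Function.update_self _ _ _
  have hgw : g w = vw := Function.update_of_ne (Ne.symm hzw) _ _
  have h := hπ.2 {z, w} g (by
    intro t ht
    simp only [Finset.mem_insert, Finset.mem_singleton] at ht
    rcases ht with rfl | rfl
    · rw [hgz]; exact (pm_iff vz).1 hvz
    · rw [hgw]; exact (pm_iff vw).1 hvw)
  have hset : {ω : EnvF d | ∀ t ∈ ({z, w} : Finset (Idx d)), ω t = g t}
      = Cs z vz ∩ Cs w vw := by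
    ext ω
    simp only [Finset.mem_insert, Finset.mem_singleton, Set.mem_setOf_eq, Set.mem_inter_iff,
      Cs]
    constructor
    · intro h; exact ⟨by rw [← hgz]; exact h z (Or.inl rfl), by rw [← hgw]; exact h w (Or.inr rfl)⟩
    · rintro ⟨h1, h2⟩ t (rfl | rfl)
      · rw [hgz]; exact h1
      · rw [hgw]; exact h2
  rw [hset] at h
  rw [h, Finset.card_insert_of_notMem (by simpa using hzw), Finset.card_singleton]
  rw [one_div, ← ENNReal.inv_pow]
  norm_num

lemma cyl3 (hπ : IsUniformProduct π) {z w y : Idx d} (hzw : z ≠ w) (hzy : z ≠ y) (hwy : w ≠ y)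
    {vz vw vy : Fin d → ℤ}
    (hvz : vz = E1 d ∨ vz = -E1 d) (hvw : vw = E1 d ∨ vw = -E1 d)
    (hvy : vy = E1 d ∨ vy = -E1 d) :
    π (Cs z vz ∩ Cs w vw ∩ Cs y vy) = 1 / 8 := by
  classical
  set g : Idx d → (Fin d → ℤ) :=
    Function.update (Function.update (fun _ => vy) w vw) z vz with hg
  have hgz : g z = vz := Function.update_self _ _ _
  have hgw : g w = vw := by
    rw [hg, Function.update_of_ne (Ne.symm hzw), Function.update_self]
  have hgy : g y = vy := by
    rw [hg, Function.update_of_ne (Ne.symm hzy), Function.update_of_ne (Ne.symm hwy)]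
  have h := hπ.2 {z, w, y} g (by
    intro t ht
    simp only [Finset.mem_insert, Finset.mem_singleton] at ht
    rcases ht with rfl | rfl | rfl
    · rw [hgz]; exact (pm_iff vz).1 hvz
    · rw [hgw]; exact (pm_iff vw).1 hvw
    · rw [hgy]; exact (pm_iff vy).1 hvy)
  have hset : {ω : EnvF d | ∀ t ∈ ({z, w, y} : Finset (Idx d)), ω t = g t}
      = Cs z vz ∩ Cs w vw ∩ Cs y vy := by
    ext ω
    simp only [Finset.mem_insert, Finset.mem_singleton, Set.mem_setOf_eq, Set.mem_inter_iff, Cs]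
    constructor
    · intro h
      exact ⟨⟨by rw [← hgz]; exact h z (Or.inl rfl), by rw [← hgw]; exact h w (Or.inr (Or.inl rfl))⟩,
        by rw [← hgy]; exact h y (Or.inr (Or.inr rfl))⟩
    · rintro ⟨⟨h1, h2⟩, h3⟩ t (rfl | rfl | rfl)
      · rw [hgz]; exact h1
      · rw [hgw]; exact h2
      · rw [hgy]; exact h3
  rw [hset] at h
  have hcard : ({z, w, y} : Finset (Idx d)).card = 3 := by
    rw [Finset.card_insert_of_notMem (by simp [hzw, hzy]),
      Finset.card_insert_of_notMem (by simpa using hwy), Finset.card_singleton]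
  rw [h, hcard, one_div, ← ENNReal.inv_pow]
  norm_num

lemma G_ae (hπ : IsUniformProduct π) : ∀ᵐ ω ∂π, ω ∈ GS d := by
  haveI hprob : IsProbabilityMeasure π := hπ.1
  have key : ∀ z : Idx d, ∀ᵐ ω ∂π, ω z = E1 d ∨ ω z = -E1 d := by
    intro z
    have hd : Disjoint (Cs z (E1 d)) (Cs z (-E1 d)) := by
      rw [Set.disjoint_left]
      intro ω h1 h2
      exact E1_ne_neg (h1.symm.trans h2)
    have hu : π (Cs z (E1 d) ∪ Cs z (-E1 d)) = 1 := by
      rw [measure_union hd (measCs _ _), cyl1 hπ (Or.inl rfl), cyl1 hπ (Or.inr rfl)]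
      rw [ENNReal.div_add_div_same]
      have h2 : (1 : ENNReal) + 1 = 2 := one_add_one_eq_two
      rw [h2]
      exact ENNReal.div_self (by norm_num) ENNReal.ofNat_ne_top
    have hm : MeasurableSet (Cs z (E1 d) ∪ Cs z (-E1 d)) := (measCs _ _).union (measCs _ _)
    have := prob_compl_eq_zero_iff hm |>.2 hu
    filter_upwards [measure_eq_zero_iff_ae_notMem.1 this] with ω hω
    exact or_iff_not_imp_left.2 (by simpa [Cs] using hω)
  have := ae_all_iff.2 key
  filter_upwards [this] with ω hω
  exact hω

end PsiAux

namespace PsiAux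
variable {d : ℕ} [NeZero d] {π : Measure (EnvF d)}

def XF (z : Idx d) (ω : EnvF d) : ℝ := ((ω z 0 : ℤ) : ℝ)

lemma measXF (z : Idx d) : Measurable (XF (d := d) z) :=
  measurable_from_top.comp ((measurable_pi_apply 0).comp (measurable_pi_apply z))

lemma XF_pos {ω : EnvF d} {z : Idx d} (h : ω z = E1 d) : XF z ω = 1 := by
  rw [XF, h, E1_apply]; norm_num

lemma XF_neg {ω : EnvF d} {z : Idx d} (h : ω z = -E1 d) : XF z ω = -1 := by
  rw [XF, h, negE1_apply]; norm_num

lemma XF_bound {ω : EnvF d} (hω : ω ∈ GS d) (z : Idx d) : |XF z ω| ≤ 1 := by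
  rcases hω z with h | h
  · rw [XF_pos h]; norm_num
  · rw [XF_neg h]; norm_num

lemma XF_sq {ω : EnvF d} (hω : ω ∈ GS d) (z : Idx d) : XF z ω * XF z ω = 1 := by
  rcases hω z with h | h
  · rw [XF_pos h]; norm_num
  · rw [XF_neg h]; norm_num

lemma tor2 : ((1 / 2 : ENNReal)).toReal = 1 / 2 := by
  rw [ENNReal.toReal_div]; norm_num

lemma tor4 : ((1 / 4 : ENNReal)).toReal = 1 / 4 := by
  rw [ENNReal.toReal_div]; norm_num

lemma tor8 : ((1 / 8 : ENNReal)).toReal = 1 / 8 := by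
  rw [ENNReal.toReal_div]; norm_num

lemma int_ind {s : Set (EnvF d)} (hs : MeasurableSet s) (c : ℝ) :
    ∫ ω, s.indicator (fun _ => c) ω ∂π = (π s).toReal * c := by
  rw [integral_indicator_const c hs, smul_eq_mul, measureReal_def]

lemma atomCC (hπ : IsUniformProduct π) {v : Fin d → ℤ} (hv : v = E1 d ∨ v = -E1 d) :
    ∫ ω, (Cs none v).indicator (fun _ => (1 : ℝ)) ω ∂π = 1 / 2 := by
  rw [int_ind (measCs _ _), cyl1 hπ hv, tor2, mul_one]

lemma atomCB (hπ : IsUniformProduct π) {v : Fin d → ℤ} (hv : v = E1 d ∨ v = -E1 d)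
    (a : Fin d → ℤ) :
    ∫ ω, (Cs none v).indicator (XF (some a)) ω ∂π = 0 := by
  haveI := hπ.1
  set A : Set (EnvF d) := Cs none v ∩ Cs (some a) (E1 d) with hA
  set B : Set (EnvF d) := Cs none v ∩ Cs (some a) (-E1 d) with hB
  have hmA : MeasurableSet A := (measCs _ _).inter (measCs _ _)
  have hmB : MeasurableSet B := (measCs _ _).inter (measCs _ _)
  have hπA : π A = 1 / 4 := cyl2 hπ (by simp) hv (Or.inl rfl)
  have hπB : π B = 1 / 4 := cyl2 hπ (by simp) hv (Or.inr rfl)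
  have hae : (Cs none v).indicator (XF (some a)) =ᵐ[π]
      fun ω => A.indicator (fun _ => (1 : ℝ)) ω + B.indicator (fun _ => (-1 : ℝ)) ω := by
    filter_upwards [G_ae hπ] with ω hω
    by_cases hn : ω ∈ Cs none v
    · rcases hω (some a) with h | h
      · have hInA : ω ∈ A := ⟨hn, h⟩
        have hNotB : ω ∉ B := fun hb => E1_ne_neg (h.symm.trans hb.2)
        rw [Set.indicator_of_mem hn, Set.indicator_of_mem hInA, Set.indicator_of_notMem hNotB,
          XF_pos h]
        norm_num
      · have hInB : ω ∈ B := ⟨hn, h⟩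
        have hNotA : ω ∉ A := fun ha => E1_ne_neg (ha.2.symm.trans h)
        rw [Set.indicator_of_mem hn, Set.indicator_of_notMem hNotA, Set.indicator_of_mem hInB,
          XF_neg h]
        norm_num
    · have hNotA : ω ∉ A := fun ha => hn ha.1
      have hNotB : ω ∉ B := fun hb => hn hb.1
      rw [Set.indicator_of_notMem hn, Set.indicator_of_notMem hNotA,
        Set.indicator_of_notMem hNotB]
      norm_num
  have iA : Integrable (fun ω => A.indicator (fun _ => (1 : ℝ)) ω) π :=
    (integrable_const _).indicator hmA
  have iB : Integrable (fun ω => B.indicator (fun _ => (-1 : ℝ)) ω) π :=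
    (integrable_const _).indicator hmB
  rw [integral_congr_ae hae, integral_add iA iB,
    int_ind hmA, int_ind hmB, hπA, hπB, tor4]
  ring

lemma atomCA (hπ : IsUniformProduct π) {v : Fin d → ℤ} (hv : v = E1 d ∨ v = -E1 d)
    (a b : Fin d → ℤ) :
    ∫ ω, (Cs none v).indicator (fun ω => XF (some a) ω * XF (some b) ω) ω ∂π
      = if a = b then 1 / 2 else 0 := by
  haveI := hπ.1
  by_cases hab : a = b
  · subst hab
    rw [if_pos rfl]
    have hae : (Cs none v).indicator (fun ω => XF (some a) ω * XF (some a) ω) =ᵐ[π]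
        (Cs none v).indicator (fun _ => (1 : ℝ)) := by
      filter_upwards [G_ae hπ] with ω hω
      by_cases hn : ω ∈ Cs none v
      · rw [Set.indicator_of_mem hn, Set.indicator_of_mem hn, XF_sq hω]
      · rw [Set.indicator_of_notMem hn, Set.indicator_of_notMem hn]
    rw [integral_congr_ae hae, atomCC hπ hv]
  · rw [if_neg hab]
    have hsab : (some a : Idx d) ≠ some b := by simpa using hab
    set App : Set (EnvF d) := Cs none v ∩ Cs (some a) (E1 d) ∩ Cs (some b) (E1 d) with hApp
    set Amm : Set (EnvF d) := Cs none v ∩ Cs (some a) (-E1 d) ∩ Cs (some b) (-E1 d) with hAmm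
    set Apm : Set (EnvF d) := Cs none v ∩ Cs (some a) (E1 d) ∩ Cs (some b) (-E1 d) with hApm
    set Amp : Set (EnvF d) := Cs none v ∩ Cs (some a) (-E1 d) ∩ Cs (some b) (E1 d) with hAmp
    have hm1 : MeasurableSet App := ((measCs _ _).inter (measCs _ _)).inter (measCs _ _)
    have hm2 : MeasurableSet Amm := ((measCs _ _).inter (measCs _ _)).inter (measCs _ _)
    have hm3 : MeasurableSet Apm := ((measCs _ _).inter (measCs _ _)).inter (measCs _ _)
    have hm4 : MeasurableSet Amp := ((measCs _ _).inter (measCs _ _)).inter (measCs _ _)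
    have hp1 : π App = 1 / 8 := cyl3 hπ (by simp) (by simp) hsab hv (Or.inl rfl) (Or.inl rfl)
    have hp2 : π Amm = 1 / 8 := cyl3 hπ (by simp) (by simp) hsab hv (Or.inr rfl) (Or.inr rfl)
    have hp3 : π Apm = 1 / 8 := cyl3 hπ (by simp) (by simp) hsab hv (Or.inl rfl) (Or.inr rfl)
    have hp4 : π Amp = 1 / 8 := cyl3 hπ (by simp) (by simp) hsab hv (Or.inr rfl) (Or.inl rfl)
    have hae : (Cs none v).indicator (fun ω => XF (some a) ω * XF (some b) ω) =ᵐ[π]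
        fun ω => (App.indicator (fun _ => (1 : ℝ)) ω + Amm.indicator (fun _ => (1 : ℝ)) ω)
          + (Apm.indicator (fun _ => (-1 : ℝ)) ω + Amp.indicator (fun _ => (-1 : ℝ)) ω) := by
      filter_upwards [G_ae hπ] with ω hω
      by_cases hn : ω ∈ Cs none v
      · have hane : ω (some a) = E1 d → ω (some a) ≠ -E1 d := fun h h' =>
          E1_ne_neg (h.symm.trans h')
        rcases hω (some a) with ha | ha <;> rcases hω (some b) with hb | hb
        · have h1 : ω ∈ App := ⟨⟨hn, ha⟩, hb⟩
          have h2 : ω ∉ Amm := fun h => E1_ne_neg (ha.symm.trans h.1.2)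
          have h3 : ω ∉ Apm := fun h => E1_ne_neg (hb.symm.trans h.2)
          have h4 : ω ∉ Amp := fun h => E1_ne_neg (ha.symm.trans h.1.2)
          rw [Set.indicator_of_mem hn, Set.indicator_of_mem h1, Set.indicator_of_notMem h2,
            Set.indicator_of_notMem h3, Set.indicator_of_notMem h4, XF_pos ha, XF_pos hb]
          norm_num
        · have h1 : ω ∉ App := fun h => E1_ne_neg (h.2.symm.trans hb)
          have h2 : ω ∉ Amm := fun h => E1_ne_neg (ha.symm.trans h.1.2)
          have h3 : ω ∈ Apm := ⟨⟨hn, ha⟩, hb⟩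
          have h4 : ω ∉ Amp := fun h => E1_ne_neg (ha.symm.trans h.1.2)
          rw [Set.indicator_of_mem hn, Set.indicator_of_notMem h1, Set.indicator_of_notMem h2,
            Set.indicator_of_mem h3, Set.indicator_of_notMem h4, XF_pos ha, XF_neg hb]
          norm_num
        · have h1 : ω ∉ App := fun h => E1_ne_neg (h.1.2.symm.trans ha)
          have h2 : ω ∉ Amm := fun h => E1_ne_neg (hb.symm.trans h.2)
          have h3 : ω ∉ Apm := fun h => E1_ne_neg (h.1.2.symm.trans ha)
          have h4 : ω ∈ Amp := ⟨⟨hn, ha⟩, hb⟩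
          rw [Set.indicator_of_mem hn, Set.indicator_of_notMem h1, Set.indicator_of_notMem h2,
            Set.indicator_of_notMem h3, Set.indicator_of_mem h4, XF_neg ha, XF_pos hb]
          norm_num
        · have h1 : ω ∉ App := fun h => E1_ne_neg (h.1.2.symm.trans ha)
          have h2 : ω ∈ Amm := ⟨⟨hn, ha⟩, hb⟩
          have h3 : ω ∉ Apm := fun h => E1_ne_neg (h.1.2.symm.trans ha)
          have h4 : ω ∉ Amp := fun h => E1_ne_neg (h.2.symm.trans hb)
          rw [Set.indicator_of_mem hn, Set.indicator_of_notMem h1, Set.indicator_of_mem h2,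
            Set.indicator_of_notMem h3, Set.indicator_of_notMem h4, XF_neg ha, XF_neg hb]
          norm_num
      · have h1 : ω ∉ App := fun h => hn h.1.1
        have h2 : ω ∉ Amm := fun h => hn h.1.1
        have h3 : ω ∉ Apm := fun h => hn h.1.1
        have h4 : ω ∉ Amp := fun h => hn h.1.1
        rw [Set.indicator_of_notMem hn, Set.indicator_of_notMem h1,
          Set.indicator_of_notMem h2, Set.indicator_of_notMem h3, Set.indicator_of_notMem h4]
        norm_num
    rw [integral_congr_ae hae]
    have i1 : Integrable (fun ω => App.indicator (fun _ => (1 : ℝ)) ω) π :=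
      (integrable_const _).indicator hm1
    have i2 : Integrable (fun ω => Amm.indicator (fun _ => (1 : ℝ)) ω) π :=
      (integrable_const _).indicator hm2
    have i3 : Integrable (fun ω => Apm.indicator (fun _ => (-1 : ℝ)) ω) π :=
      (integrable_const _).indicator hm3
    have i4 : Integrable (fun ω => Amp.indicator (fun _ => (-1 : ℝ)) ω) π :=
      (integrable_const _).indicator hm4
    have i12 : Integrable (fun ω => App.indicator (fun _ => (1 : ℝ)) ω
        + Amm.indicator (fun _ => (1 : ℝ)) ω) π := i1.add i2
    have i34 : Integrable (fun ω => Apm.indicator (fun _ => (-1 : ℝ)) ω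
        + Amp.indicator (fun _ => (-1 : ℝ)) ω) π := i3.add i4
    rw [integral_add i12 i34, integral_add i1 i2, integral_add i3 i4,
      int_ind hm1, int_ind hm2, int_ind hm3, int_ind hm4, hp1, hp2, hp3, hp4, tor8]
    ring

lemma splitInt (hπ : IsUniformProduct π) {f : EnvF d → ℝ} (hf : AEStronglyMeasurable f π)
    {C : ℝ} (hbd : ∀ ω ∈ GS d, |f ω| ≤ C) :
    ∫ ω, f ω ∂π = (∫ ω, (Cs none (E1 d)).indicator f ω ∂π)
      + ∫ ω, (Cs none (-E1 d)).indicator f ω ∂π := by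
  haveI := hπ.1
  have hInt : Integrable f π := by
    refine Integrable.mono' (integrable_const C) hf ?_
    filter_upwards [G_ae hπ] with ω hω
    rw [Real.norm_eq_abs]
    exact hbd ω hω
  have hae : f =ᵐ[π] fun ω => (Cs none (E1 d)).indicator f ω
      + (Cs none (-E1 d)).indicator f ω := by
    filter_upwards [G_ae hπ] with ω hω
    rcases hω none with h | h
    · have h1 : ω ∈ Cs none (E1 d) := h
      have h2 : ω ∉ Cs none (-E1 d) := fun h' => E1_ne_neg (h.symm.trans h')
      rw [Set.indicator_of_mem h1, Set.indicator_of_notMem h2, add_zero]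
    · have h1 : ω ∉ Cs none (E1 d) := fun h' => E1_ne_neg (h'.symm.trans h)
      have h2 : ω ∈ Cs none (-E1 d) := h
      rw [Set.indicator_of_notMem h1, Set.indicator_of_mem h2, zero_add]
  have i1 : Integrable (fun ω => (Cs none (E1 d)).indicator f ω) π :=
    hInt.indicator (measCs _ _)
  have i2 : Integrable (fun ω => (Cs none (-E1 d)).indicator f ω) π :=
    hInt.indicator (measCs _ _)
  rw [integral_congr_ae hae, integral_add i1 i2]

end PsiAux

namespace PsiAux
variable {d : ℕ} [NeZero d] {π : Measure (EnvF d)}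

lemma indic_const_mul_int {s : Set (EnvF d)} (c : ℝ) (f : EnvF d → ℝ) :
    ∫ ω, s.indicator (fun ω => c * f ω) ω ∂π = c * ∫ ω, s.indicator f ω ∂π := by
  simp_rw [Set.indicator_const_mul]
  rw [integral_const_mul]

lemma XF_val {ω : EnvF d} {v : Fin d → ℤ} (hv : v = E1 d ∨ v = -E1 d)
    (hω : ω ∈ Cs none v) : XF none ω = if v = E1 d then 1 else -1 := by
  rcases hv with rfl | rfl
  · rw [if_pos rfl]; exact XF_pos hω
  · rw [if_neg (Ne.symm E1_ne_neg)]; exact XF_neg hω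

lemma FM (hπ : IsUniformProduct π) (z w : Idx d) :
    ∫ ω, XF z ω * XF w ω ∂π = if z = w then 1 else 0 := by
  have hmeas : AEStronglyMeasurable (fun ω => XF z ω * XF w ω) π :=
    ((measXF z).mul (measXF w)).aestronglyMeasurable
  have hbd : ∀ ω ∈ GS d, |XF z ω * XF w ω| ≤ 1 := by
    intro ω h
    rw [abs_mul]
    calc |XF z ω| * |XF w ω| ≤ 1 * 1 :=
      mul_le_mul (XF_bound h z) (XF_bound h w) (abs_nonneg _) zero_le_one
    _ = 1 := one_mul 1
  rw [splitInt hπ hmeas hbd]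
  have piece : ∀ v : Fin d → ℤ, (v = E1 d ∨ v = -E1 d) →
      ∫ ω, (Cs none v).indicator (fun ω => XF z ω * XF w ω) ω ∂π
        = if z = w then 1 / 2 else 0 := by
    intro v hv
    set c : ℝ := if v = E1 d then 1 else -1 with hc
    match z, w with
    | none, none =>
      have he : Set.EqOn (fun ω => XF none ω * XF none ω) (fun _ => (1 : ℝ)) (Cs none v) := by
        intro ω hω
        have h1 := XF_val hv hω
        simp only []
        rw [h1]
        rcases hv with rfl | rfl
        · rw [if_pos rfl]; norm_num
        · rw [if_neg (Ne.symm E1_ne_neg)]; norm_num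
      rw [Set.indicator_congr he, atomCC hπ hv, if_pos rfl]
    | none, some b =>
      have he : Set.EqOn (fun ω => XF none ω * XF (some b) ω)
          (fun ω => c * XF (some b) ω) (Cs none v) := by
        intro ω hω
        simp only []
        rw [XF_val hv hω, ← hc]
      rw [Set.indicator_congr he, indic_const_mul_int, atomCB hπ hv, mul_zero,
        if_neg (by simp)]
    | some a, none =>
      have he : Set.EqOn (fun ω => XF (some a) ω * XF none ω)
          (fun ω => c * XF (some a) ω) (Cs none v) := by
        intro ω hω
        simp only []
        rw [XF_val hv hω, ← hc, mul_comm]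
      rw [Set.indicator_congr he, indic_const_mul_int, atomCB hπ hv, mul_zero,
        if_neg (by simp)]
    | some a, some b =>
      rw [atomCA hπ hv a b]
      by_cases hab : a = b
      · rw [if_pos hab, if_pos (by rw [hab])]
      · rw [if_neg hab, if_neg (by simpa using hab)]
  rw [piece _ (Or.inl rfl), piece _ (Or.inr rfl)]
  by_cases hzw : z = w
  · rw [if_pos hzw, if_pos hzw]; norm_num
  · rw [if_neg hzw, if_neg hzw]; norm_num

def TS (z : Idx d) (ω : EnvF d) : ℝ := ((swapMap (tauStar ω) z 0 : ℤ) : ℝ)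

lemma TS_none (ω : EnvF d) : TS none ω = XF (some (ω none)) ω := by
  simp [TS, swapMap, tauStar, XF, zero_add]

lemma TS_some_zero (ω : EnvF d) : TS (some 0) ω = XF none ω := by
  simp [TS, swapMap, tauStar, XF]

lemma TS_some {x : Fin d → ℤ} (hx : x ≠ 0) (ω : EnvF d) :
    TS (some x) ω = XF (some (x + ω none)) ω := by
  simp [TS, swapMap, tauStar, XF, hx]

lemma meas_rand (h : (Fin d → ℤ) → (Fin d → ℤ)) :
    Measurable fun ω : EnvF d => ω (some (h (ω none))) := by
  apply measurable_to_countable'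
  intro y
  have hset : (fun ω : EnvF d => ω (some (h (ω none)))) ⁻¹' {y}
      = ⋃ v : Fin d → ℤ, (Cs none v ∩ Cs (some (h v)) y) := by
    ext ω
    simp only [Set.mem_preimage, Set.mem_singleton_iff, Set.mem_iUnion, Set.mem_inter_iff, Cs,
      Set.mem_setOf_eq]
    constructor
    · intro hy; exact ⟨ω none, rfl, hy⟩
    · rintro ⟨v, h1, h2⟩; rw [h1]; exact h2
  rw [hset]
  exact MeasurableSet.iUnion fun v => (measCs _ _).inter (measCs _ _)

lemma measTS (z : Idx d) : Measurable (TS (d := d) z) := by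
  match z with
  | none =>
    have : TS (d := d) none = fun ω => ((ω (some (id (ω none))) 0 : ℤ) : ℝ) := by
      funext ω; rw [TS_none]; rfl
    rw [this]
    exact measurable_from_top.comp ((measurable_pi_apply 0).comp (meas_rand id))
  | some x =>
    by_cases hx : x = 0
    · subst hx
      have : TS (d := d) (some 0) = XF none := funext TS_some_zero
      rw [this]
      exact measXF none
    · have : TS (d := d) (some x) = fun ω => ((ω (some ((fun v => x + v) (ω none))) 0 : ℤ) : ℝ) := by
        funext ω; rw [TS_some hx]; rfl
      rw [this]
      exact measurable_from_top.comp ((measurable_pi_apply 0).comp (meas_rand _))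

lemma TS_bound {ω : EnvF d} (hω : ω ∈ GS d) (z : Idx d) : |TS z ω| ≤ 1 := by
  match z with
  | none => rw [TS_none]; exact XF_bound hω _
  | some x =>
    by_cases hx : x = 0
    · subst hx; rw [TS_some_zero]; exact XF_bound hω _
    · rw [TS_some hx]; exact XF_bound hω _

end PsiAux

namespace PsiAux
variable {d : ℕ} [NeZero d] {π : Measure (EnvF d)}

lemma XT_meas (w z : Idx d) : AEStronglyMeasurable (fun ω => XF w ω * TS z ω) π :=
  ((measXF w).mul (measTS z)).aestronglyMeasurable

lemma XT_bound (w z : Idx d) : ∀ ω ∈ GS d, |XF w ω * TS z ω| ≤ 1 := by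
  intro ω h
  rw [abs_mul]
  calc |XF w ω| * |TS z ω| ≤ 1 * 1 :=
    mul_le_mul (XF_bound h w) (TS_bound h z) (abs_nonneg _) zero_le_one
  _ = 1 := one_mul 1

lemma MW_none (hπ : IsUniformProduct π) : ∫ ω, XF none ω * TS none ω ∂π = 0 := by
  rw [splitInt hπ (XT_meas none none) (XT_bound none none)]
  have piece : ∀ v : Fin d → ℤ, (v = E1 d ∨ v = -E1 d) →
      ∫ ω, (Cs none v).indicator (fun ω => XF none ω * TS none ω) ω ∂π = 0 := by
    intro v hv
    have he : Set.EqOn (fun ω => XF none ω * TS none ω)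
        (fun ω => (if v = E1 d then (1:ℝ) else -1) * XF (some v) ω) (Cs none v) := by
      intro ω hω
      simp only []
      rw [TS_none, hω, XF_val hv hω]
    rw [Set.indicator_congr he, indic_const_mul_int, atomCB hπ hv, mul_zero]
  rw [piece _ (Or.inl rfl), piece _ (Or.inr rfl), add_zero]

lemma MW_some (hπ : IsUniformProduct π) (y : Fin d → ℤ) :
    ∫ ω, XF (some y) ω * TS none ω ∂π
      = (if y = E1 d then (1:ℝ)/2 else 0) + (if y = -E1 d then 1/2 else 0) := by
  rw [splitInt hπ (XT_meas (some y) none) (XT_bound (some y) none)]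
  have piece : ∀ v : Fin d → ℤ, (v = E1 d ∨ v = -E1 d) →
      ∫ ω, (Cs none v).indicator (fun ω => XF (some y) ω * TS none ω) ω ∂π
        = if y = v then (1:ℝ)/2 else 0 := by
    intro v hv
    have he : Set.EqOn (fun ω => XF (some y) ω * TS none ω)
        (fun ω => XF (some y) ω * XF (some v) ω) (Cs none v) := by
      intro ω hω
      simp only []
      rw [TS_none, hω]
    rw [Set.indicator_congr he, atomCA hπ hv y v]
  rw [piece _ (Or.inl rfl), piece _ (Or.inr rfl)]

lemma MZ_none (hπ : IsUniformProduct π) {x : Fin d → ℤ} (hx : x ≠ 0) :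
    ∫ ω, XF none ω * TS (some x) ω ∂π = 0 := by
  rw [splitInt hπ (XT_meas none (some x)) (XT_bound none (some x))]
  have piece : ∀ v : Fin d → ℤ, (v = E1 d ∨ v = -E1 d) →
      ∫ ω, (Cs none v).indicator (fun ω => XF none ω * TS (some x) ω) ω ∂π = 0 := by
    intro v hv
    have he : Set.EqOn (fun ω => XF none ω * TS (some x) ω)
        (fun ω => (if v = E1 d then (1:ℝ) else -1) * XF (some (x + v)) ω) (Cs none v) := by
      intro ω hω
      simp only []
      rw [TS_some hx, hω, XF_val hv hω]
    rw [Set.indicator_congr he, indic_const_mul_int, atomCB hπ hv, mul_zero]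
  rw [piece _ (Or.inl rfl), piece _ (Or.inr rfl), add_zero]

lemma MZ_some (hπ : IsUniformProduct π) {x : Fin d → ℤ} (hx : x ≠ 0) (y : Fin d → ℤ) :
    ∫ ω, XF (some y) ω * TS (some x) ω ∂π
      = (if y = x + E1 d then (1:ℝ)/2 else 0) + (if y = x - E1 d then 1/2 else 0) := by
  rw [splitInt hπ (XT_meas (some y) (some x)) (XT_bound (some y) (some x))]
  have piece : ∀ v : Fin d → ℤ, (v = E1 d ∨ v = -E1 d) →
      ∫ ω, (Cs none v).indicator (fun ω => XF (some y) ω * TS (some x) ω) ω ∂π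
        = if y = x + v then (1:ℝ)/2 else 0 := by
    intro v hv
    have he : Set.EqOn (fun ω => XF (some y) ω * TS (some x) ω)
        (fun ω => XF (some y) ω * XF (some (x + v)) ω) (Cs none v) := by
      intro ω hω
      simp only []
      rw [TS_some hx, hω]
    rw [Set.indicator_congr he, atomCA hπ hv y (x + v)]
  rw [piece _ (Or.inl rfl), piece _ (Or.inr rfl), sub_eq_add_neg]

end PsiAux

theorem tsum_option_split {β : Type*} {f : Option β → ℝ} (h : Summable f) :
    ∑' z, f z = (∑' x, f (some x)) + f none := by
  classical
  rw [Summable.tsum_eq_add_tsum_ite h none, add_comm]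
  congr 1
  rw [← (Option.some_injective _).tsum_eq (f := fun z => if z = none then 0 else f z)]
  · simp
  · intro z hz
    cases z with
    | none => simp at hz
    | some x => exact ⟨x, rfl⟩

theorem summable_option {β : Type*} {f : Option β → ℝ}
    (h : Summable fun x => f (some x)) : Summable f := by
  classical
  have hg : Summable (fun z : Option β => if z = none then 0 else f z) := by
    refine ((Option.some_injective β).summable_iff ?_).1 ?_
    · intro z hz
      cases z with
      | none => simp
      | some x => exact absurd ⟨x, rfl⟩ hz
    · simpa [Function.comp_def] using h
  have hh : Summable (fun z : Option β => if z = none then f none else 0) := by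
    apply summable_of_ne_finset_zero (s := {none})
    intro z hz
    rw [if_neg (by simpa using hz)]
  have hf : f = fun z => (if z = none then 0 else f z) + (if z = none then f none else 0) := by
    funext z
    by_cases hz : z = none
    · subst hz; simp
    · simp [hz]
  rw [hf]
  exact hg.add hh

namespace PsiAux
variable {d : ℕ} [NeZero d] {π : Measure (EnvF d)}

lemma pairing (hπ : IsUniformProduct π) {u : Idx d → ℝ}
    (hsum : Summable fun x : Fin d → ℤ => |u (some x)|)
    (T : Idx d → EnvF d → ℝ) (hTm : ∀ z, Measurable (T z))
    (hTb : ∀ z, ∀ ω ∈ GS d, |T z ω| ≤ 1)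
    (g : EnvF d → ℝ) (hg : AEStronglyMeasurable g π) {C : ℝ} (hC : 0 ≤ C)
    (hgb : ∀ ω ∈ GS d, |g ω| ≤ C) :
    ∫ ω, ((∑' x : Fin d → ℤ, u (some x) * T (some x) ω) + u none * T none ω) * g ω ∂π
      = (∑' x : Fin d → ℤ, u (some x) * ∫ ω, T (some x) ω * g ω ∂π)
        + u none * ∫ ω, T none ω * g ω ∂π := by
  haveI := hπ.1
  have hsumO : Summable fun z : Idx d => |u z| := summable_option hsum
  have hbd3 : ∀ z : Idx d, ∀ ω ∈ GS d, |u z * T z ω * g ω| ≤ |u z| * C := by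
    intro z ω hω
    rw [abs_mul, abs_mul]
    have h1 := hTb z ω hω
    have h2 := hgb ω hω
    calc |u z| * |T z ω| * |g ω| ≤ |u z| * 1 * |g ω| :=
      mul_le_mul_of_nonneg_right (mul_le_mul_of_nonneg_left h1 (abs_nonneg _)) (abs_nonneg _)
    _ = |u z| * |g ω| := by ring
    _ ≤ |u z| * C := mul_le_mul_of_nonneg_left h2 (abs_nonneg _)
  have step1 : (fun ω => ((∑' x, u (some x) * T (some x) ω) + u none * T none ω) * g ω)
      =ᵐ[π] fun ω => ∑' z : Idx d, u z * T z ω * g ω := by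
    filter_upwards [G_ae hπ] with ω hω
    have hs : Summable (fun z : Idx d => u z * T z ω * g ω) := by
      apply Summable.of_abs
      exact Summable.of_nonneg_of_le (fun _ => abs_nonneg _)
        (fun z => hbd3 z ω hω) (hsumO.mul_right C)
    rw [tsum_option_split hs, add_mul, ← tsum_mul_right, mul_assoc]
  have hmes : ∀ z : Idx d, AEStronglyMeasurable (fun ω => u z * T z ω * g ω) π := fun z =>
    ((measurable_const.mul (hTm z)).aestronglyMeasurable.mul hg)
  have hlin : ∑' z : Idx d, ∫⁻ ω, ‖u z * T z ω * g ω‖₊ ∂π ≠ ⊤ := by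
    have hb : ∀ z : Idx d, ∫⁻ ω, ‖u z * T z ω * g ω‖₊ ∂π ≤ ENNReal.ofReal (|u z| * C) := by
      intro z
      have hae : ∀ᵐ ω ∂π, (‖u z * T z ω * g ω‖₊ : ENNReal) ≤ ENNReal.ofReal (|u z| * C) := by
        filter_upwards [G_ae hπ] with ω hω
        rw [show ((‖u z * T z ω * g ω‖₊ : ENNReal)) = ENNReal.ofReal ‖u z * T z ω * g ω‖ from
            (ofReal_norm _).symm]
        exact ENNReal.ofReal_le_ofReal (by rw [Real.norm_eq_abs]; exact hbd3 z ω hω)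
      calc ∫⁻ ω, ‖u z * T z ω * g ω‖₊ ∂π
          ≤ ∫⁻ _, ENNReal.ofReal (|u z| * C) ∂π := lintegral_mono_ae hae
        _ = ENNReal.ofReal (|u z| * C) := by
            rw [lintegral_const, measure_univ, mul_one]
    refine ne_top_of_le_ne_top ?_ (ENNReal.tsum_le_tsum hb)
    rw [← ENNReal.ofReal_tsum_of_nonneg (fun z => by positivity) (hsumO.mul_right C)]
    exact ENNReal.ofReal_ne_top
  have step2 : ∫ ω, ∑' z : Idx d, u z * T z ω * g ω ∂π
      = ∑' z : Idx d, ∫ ω, u z * T z ω * g ω ∂π := integral_tsum hmes hlin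
  have step3 : ∀ z : Idx d, ∫ ω, u z * T z ω * g ω ∂π = u z * ∫ ω, T z ω * g ω ∂π := by
    intro z
    simp_rw [mul_assoc]
    rw [integral_const_mul]
  have hIb : ∀ z : Idx d, |∫ ω, T z ω * g ω ∂π| ≤ C := by
    intro z
    have hae : ∀ᵐ ω ∂π, ‖T z ω * g ω‖ ≤ C := by
      filter_upwards [G_ae hπ] with ω hω
      rw [Real.norm_eq_abs, abs_mul]
      calc |T z ω| * |g ω| ≤ 1 * C :=
        mul_le_mul (hTb z ω hω) (hgb ω hω) (abs_nonneg _) zero_le_one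
      _ = C := one_mul C
    have := norm_integral_le_of_norm_le_const (μ := π) hae
    rw [probReal_univ, mul_one] at this
    simpa [Real.norm_eq_abs] using this
  have hsummf : Summable fun z : Idx d => u z * ∫ ω, T z ω * g ω ∂π := by
    apply Summable.of_abs
    refine Summable.of_nonneg_of_le (fun _ => abs_nonneg _) ?_ (hsumO.mul_right C)
    intro z
    rw [abs_mul]
    exact mul_le_mul_of_nonneg_left (hIb z) (abs_nonneg _)
  rw [integral_congr_ae step1, step2]
  rw [tsum_congr step3, tsum_option_split hsummf]

end PsiAux

namespace PsiAux
variable {d : ℕ} [NeZero d] {π : Measure (EnvF d)}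

lemma psiLike_aesm (hπ : IsUniformProduct π) {u : Idx d → ℝ}
    (hsum : Summable fun x : Fin d → ℤ => |u (some x)|)
    (T : Idx d → EnvF d → ℝ) (hTm : ∀ z, Measurable (T z))
    (hTb : ∀ z, ∀ ω ∈ GS d, |T z ω| ≤ 1) :
    AEStronglyMeasurable
      (fun ω => (∑' x : Fin d → ℤ, u (some x) * T (some x) ω) + u none * T none ω) π := by
  haveI : Nonempty (Fin d) := ⟨⟨0, Nat.pos_of_ne_zero (NeZero.ne d)⟩⟩
  haveI : Infinite (Fin d → ℤ) := by infer_instance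
  obtain ⟨D⟩ : Nonempty (Denumerable (Fin d → ℤ)) :=
    nonempty_denumerable_iff.2 ⟨inferInstance, inferInstance⟩
  set e : ℕ ≃ (Fin d → ℤ) := (@Denumerable.eqv _ D).symm with he
  apply aestronglyMeasurable_of_tendsto_ae (u := Filter.atTop)
    (f := fun n ω => (∑ k ∈ Finset.range n, u (some (e k)) * T (some (e k)) ω)
      + u none * T none ω)
  · intro n
    exact ((Finset.measurable_sum _ fun k _ => measurable_const.mul (hTm _)).add
      (measurable_const.mul (hTm none))).aestronglyMeasurable
  · filter_upwards [G_ae hπ] with ω hω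
    have hs : Summable (fun x : Fin d → ℤ => u (some x) * T (some x) ω) := by
      apply Summable.of_abs
      refine Summable.of_nonneg_of_le (fun _ => abs_nonneg _) ?_ hsum
      intro x
      rw [abs_mul]
      calc |u (some x)| * |T (some x) ω| ≤ |u (some x)| * 1 :=
        mul_le_mul_of_nonneg_left (hTb _ ω hω) (abs_nonneg _)
      _ = |u (some x)| := mul_one _
    have hs2 : Summable fun k : ℕ => u (some (e k)) * T (some (e k)) ω :=
      e.summable_iff.2 hs
    have ht := hs2.hasSum.tendsto_sum_nat
    rw [e.tsum_eq (fun x => u (some x) * T (some x) ω)] at ht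
    exact ht.add tendsto_const_nhds

end PsiAux

namespace PsiAux
variable {d : ℕ} [NeZero d] {π : Measure (EnvF d)}

lemma psi_eq (u : Idx d → ℝ) (ω : EnvF d) :
    psiF u ω = (∑' x : Fin d → ℤ, u (some x) * XF (some x) ω) + u none * XF none ω := rfl

lemma psiS_eq (u : Idx d → ℝ) (ω : EnvF d) :
    psiF u (swapMap (tauStar ω))
      = (∑' x : Fin d → ℤ, u (some x) * TS (some x) ω) + u none * TS none ω := rfl

variable {u : Idx d → ℝ}

lemma psi_aesm (hπ : IsUniformProduct π) (hsum : Summable fun x : Fin d → ℤ => |u (some x)|) :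
    AEStronglyMeasurable (psiF u) π := by
  have := psiLike_aesm hπ hsum XF (fun z => measXF z) (fun z ω h => XF_bound h z)
  exact this.congr (Filter.Eventually.of_forall fun ω => (psi_eq u ω).symm)

lemma psi_bound (hsum : Summable fun x : Fin d → ℤ => |u (some x)|) :
    ∀ ω ∈ GS d, |psiF u ω| ≤ (∑' x : Fin d → ℤ, |u (some x)|) + |u none| := by
  intro ω hω
  rw [psi_eq]
  have hs : Summable (fun x : Fin d → ℤ => ‖u (some x) * XF (some x) ω‖) := by
    refine Summable.of_nonneg_of_le (fun _ => norm_nonneg _) ?_ hsum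
    intro x
    rw [Real.norm_eq_abs, abs_mul]
    calc |u (some x)| * |XF (some x) ω| ≤ |u (some x)| * 1 :=
      mul_le_mul_of_nonneg_left (XF_bound hω _) (abs_nonneg _)
    _ = |u (some x)| := mul_one _
  calc |(∑' x : Fin d → ℤ, u (some x) * XF (some x) ω) + u none * XF none ω|
      ≤ |∑' x : Fin d → ℤ, u (some x) * XF (some x) ω| + |u none * XF none ω| := abs_add_le _ _
  _ ≤ (∑' x : Fin d → ℤ, |u (some x)|) + |u none| := by
      refine add_le_add ?_ ?_
      · calc |∑' x : Fin d → ℤ, u (some x) * XF (some x) ω|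
            ≤ ∑' x : Fin d → ℤ, ‖u (some x) * XF (some x) ω‖ := norm_tsum_le_tsum_norm hs
        _ ≤ ∑' x : Fin d → ℤ, |u (some x)| := by
            refine Summable.tsum_le_tsum ?_ hs hsum
            intro x
            rw [Real.norm_eq_abs, abs_mul]
            calc |u (some x)| * |XF (some x) ω| ≤ |u (some x)| * 1 :=
              mul_le_mul_of_nonneg_left (XF_bound hω _) (abs_nonneg _)
            _ = |u (some x)| := mul_one _
      · rw [abs_mul]
        calc |u none| * |XF none ω| ≤ |u none| * 1 :=
          mul_le_mul_of_nonneg_left (XF_bound hω _) (abs_nonneg _)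
        _ = |u none| := mul_one _

lemma IpsiX (hπ : IsUniformProduct π) (hsum : Summable fun x : Fin d → ℤ => |u (some x)|)
    (z : Idx d) : ∫ ω, psiF u ω * XF z ω ∂π = u z := by
  have key := pairing hπ hsum XF (fun z => measXF z) (fun z ω h => XF_bound h z)
    (XF z) (measXF z).aestronglyMeasurable zero_le_one (fun ω h => XF_bound h z)
  calc ∫ ω, psiF u ω * XF z ω ∂π
      = (∑' x : Fin d → ℤ, u (some x) * ∫ ω, XF (some x) ω * XF z ω ∂π)
        + u none * ∫ ω, XF none ω * XF z ω ∂π := key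
  _ = u z := by
    rcases z with _ | y
    · have h1 : ∀ x : Fin d → ℤ, (∫ ω, XF (some x) ω * XF none ω ∂π) = 0 := by
        intro x
        rw [FM hπ, if_neg (by simp)]
      have h2 : (∫ ω, XF none ω * XF none ω ∂π) = 1 := by
        rw [FM hπ, if_pos rfl]
      simp_rw [h1, mul_zero, tsum_zero, h2, mul_one, zero_add]
    · have h1 : ∀ x : Fin d → ℤ, (∫ ω, XF (some x) ω * XF (some y) ω ∂π)
          = if x = y then 1 else 0 := by
        intro x
        rw [FM hπ]
        by_cases hxy : x = y
        · rw [if_pos (by rw [hxy]), if_pos hxy]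
        · rw [if_neg (by simpa using hxy), if_neg hxy]
      have h2 : (∫ ω, XF none ω * XF (some y) ω ∂π) = 0 := by
        rw [FM hπ, if_neg (by simp)]
      simp_rw [h1, h2, mul_zero, add_zero]
      rw [tsum_eq_single y]
      · rw [if_pos rfl, mul_one]
      · intro x hx
        rw [if_neg hx, mul_zero]

lemma IpsiTS_none (hπ : IsUniformProduct π)
    (hsum : Summable fun x : Fin d → ℤ => |u (some x)|) :
    ∫ ω, psiF u ω * TS none ω ∂π
      = u (some (E1 d)) * (1 / 2) + u (some (-E1 d)) * (1 / 2) := by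
  have key := pairing hπ hsum XF (fun z => measXF z) (fun z ω h => XF_bound h z)
    (TS none) (measTS none).aestronglyMeasurable zero_le_one (fun ω h => TS_bound h none)
  calc ∫ ω, psiF u ω * TS none ω ∂π
      = (∑' x : Fin d → ℤ, u (some x) * ∫ ω, XF (some x) ω * TS none ω ∂π)
        + u none * ∫ ω, XF none ω * TS none ω ∂π := key
  _ = u (some (E1 d)) * (1 / 2) + u (some (-E1 d)) * (1 / 2) := by
    rw [MW_none hπ, mul_zero, add_zero]
    have h1 : ∀ x : Fin d → ℤ, u (some x) * ∫ ω, XF (some x) ω * TS none ω ∂π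
        = u (some x) * (if x = E1 d then (1:ℝ)/2 else 0)
          + u (some x) * (if x = -E1 d then (1:ℝ)/2 else 0) := by
      intro x
      rw [MW_some hπ, mul_add]
    rw [tsum_congr h1]
    have s1 : Summable fun x : Fin d → ℤ =>
        u (some x) * (if x = E1 d then (1:ℝ)/2 else 0) := by
      apply summable_of_ne_finset_zero (s := {E1 d})
      intro x hx
      rw [if_neg (by simpa using hx), mul_zero]
    have s2 : Summable fun x : Fin d → ℤ =>
        u (some x) * (if x = -E1 d then (1:ℝ)/2 else 0) := by
      apply summable_of_ne_finset_zero (s := {-E1 d})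
      intro x hx
      rw [if_neg (by simpa using hx), mul_zero]
    rw [Summable.tsum_add s1 s2, tsum_eq_single (E1 d) (fun x hx => by rw [if_neg hx, mul_zero]),
      tsum_eq_single (-E1 d) (fun x hx => by rw [if_neg hx, mul_zero]), if_pos rfl, if_pos rfl]

lemma IpsiTS_some0 (hπ : IsUniformProduct π)
    (hsum : Summable fun x : Fin d → ℤ => |u (some x)|) :
    ∫ ω, psiF u ω * TS (some 0) ω ∂π = u none := by
  have h : (fun ω => psiF u ω * TS (some 0) ω) = fun ω => psiF u ω * XF none ω :=
    funext fun ω => by rw [TS_some_zero]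
  rw [h]
  exact IpsiX hπ hsum none

lemma IpsiTS_some (hπ : IsUniformProduct π)
    (hsum : Summable fun x : Fin d → ℤ => |u (some x)|) {x : Fin d → ℤ} (hx : x ≠ 0) :
    ∫ ω, psiF u ω * TS (some x) ω ∂π
      = u (some (x + E1 d)) * (1 / 2) + u (some (x - E1 d)) * (1 / 2) := by
  have key := pairing hπ hsum XF (fun z => measXF z) (fun z ω h => XF_bound h z)
    (TS (some x)) (measTS (some x)).aestronglyMeasurable zero_le_one
    (fun ω h => TS_bound h (some x))
  calc ∫ ω, psiF u ω * TS (some x) ω ∂π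
      = (∑' y : Fin d → ℤ, u (some y) * ∫ ω, XF (some y) ω * TS (some x) ω ∂π)
        + u none * ∫ ω, XF none ω * TS (some x) ω ∂π := key
  _ = u (some (x + E1 d)) * (1 / 2) + u (some (x - E1 d)) * (1 / 2) := by
    rw [MZ_none hπ hx, mul_zero, add_zero]
    have h1 : ∀ y : Fin d → ℤ, u (some y) * ∫ ω, XF (some y) ω * TS (some x) ω ∂π
        = u (some y) * (if y = x + E1 d then (1:ℝ)/2 else 0)
          + u (some y) * (if y = x - E1 d then (1:ℝ)/2 else 0) := by
      intro y
      rw [MZ_some hπ hx, mul_add]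
    rw [tsum_congr h1]
    have s1 : Summable fun y : Fin d → ℤ =>
        u (some y) * (if y = x + E1 d then (1:ℝ)/2 else 0) := by
      apply summable_of_ne_finset_zero (s := {x + E1 d})
      intro y hy
      rw [if_neg (by simpa using hy), mul_zero]
    have s2 : Summable fun y : Fin d → ℤ =>
        u (some y) * (if y = x - E1 d then (1:ℝ)/2 else 0) := by
      apply summable_of_ne_finset_zero (s := {x - E1 d})
      intro y hy
      rw [if_neg (by simpa using hy), mul_zero]
    rw [Summable.tsum_add s1 s2, tsum_eq_single (x + E1 d) (fun y hy => by rw [if_neg hy, mul_zero]),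
      tsum_eq_single (x - E1 d) (fun y hy => by rw [if_neg hy, mul_zero]), if_pos rfl, if_pos rfl]

end PsiAux

namespace PsiAux
variable {d : ℕ} [NeZero d] {π : Measure (EnvF d)}

section Assembly
variable {u : Idx d → ℝ}

lemma habs (hsum : Summable fun x : Fin d → ℤ => |u (some x)|) (y : Fin d → ℤ) :
    |u (some y)| ≤ ∑' x : Fin d → ℤ, |u (some x)| :=
  hsum.le_tsum y (fun _ _ => abs_nonneg _)

lemma sum_mul_bdd (hsum : Summable fun x : Fin d → ℤ => |u (some x)|)
    (g : (Fin d → ℤ) → ℝ) (hg : ∀ x, |g x| ≤ ∑' x : Fin d → ℤ, |u (some x)|) :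
    Summable fun x : Fin d → ℤ => u (some x) * g x := by
  apply Summable.of_abs
  refine Summable.of_nonneg_of_le (fun _ => abs_nonneg _) ?_
    (hsum.mul_right (∑' x : Fin d → ℤ, |u (some x)|))
  intro x
  rw [abs_mul]
  exact mul_le_mul_of_nonneg_left (hg x) (abs_nonneg _)

lemma sum_shift (hsum : Summable fun x : Fin d → ℤ => |u (some x)|) (c : Fin d → ℤ) :
    Summable fun x : Fin d → ℤ => u (some x) * u (some (x + c)) :=
  sum_mul_bdd hsum _ (fun x => habs hsum (x + c))

lemma sum_shift' (hsum : Summable fun x : Fin d → ℤ => |u (some x)|) (c : Fin d → ℤ) :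
    Summable fun x : Fin d → ℤ => u (some (x + c)) * u (some x) :=
  (sum_shift hsum c).congr (fun x => mul_comm _ _)

lemma sum_sq (hsum : Summable fun x : Fin d → ℤ => |u (some x)|) :
    Summable fun x : Fin d → ℤ => u (some x) ^ 2 := by
  refine (sum_mul_bdd hsum _ (fun x => habs hsum x)).congr (fun x => ?_)
  rw [pow_two]

lemma sum_sq_shift (hsum : Summable fun x : Fin d → ℤ => |u (some x)|) :
    Summable fun x : Fin d → ℤ => u (some (x + E1 d)) ^ 2 := by
  have h := (sum_sq hsum).comp_injective (Equiv.addRight (E1 d)).injective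
  exact h.congr (fun x => by simp)

lemma shift_sq_tsum (hsum : Summable fun x : Fin d → ℤ => |u (some x)|) :
    ∑' x : Fin d → ℤ, u (some (x + E1 d)) ^ 2 = ∑' x : Fin d → ℤ, u (some x) ^ 2 := by
  have h := (Equiv.addRight (E1 d)).tsum_eq (fun y : Fin d → ℤ => u (some y) ^ 2)
  simpa using h

lemma part_iv (hsum : Summable fun x : Fin d → ℤ => |u (some x)|) :
    (∑' x : Fin d → ℤ, u (some (x + E1 d)) * u (some x)) + u (some 0) ^ 2
      = ((∑' x : Fin d → ℤ, u (some x) ^ 2) + u (some 0) ^ 2)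
        - (1 / 2) * ∑' x : Fin d → ℤ, (u (some (x + E1 d)) - u (some x)) ^ 2 := by
  have hsq := sum_sq hsum
  have hsq' := sum_sq_shift hsum
  have hprod := sum_shift' hsum (E1 d)
  have hpt : ∀ x : Fin d → ℤ, (u (some (x + E1 d)) - u (some x)) ^ 2
      = (u (some (x + E1 d)) ^ 2 + u (some x) ^ 2)
        - 2 * (u (some (x + E1 d)) * u (some x)) := by
    intro x; ring
  have hD : ∑' x : Fin d → ℤ, (u (some (x + E1 d)) - u (some x)) ^ 2
      = ((∑' x : Fin d → ℤ, u (some (x + E1 d)) ^ 2) + ∑' x : Fin d → ℤ, u (some x) ^ 2)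
        - 2 * ∑' x : Fin d → ℤ, u (some (x + E1 d)) * u (some x) := by
    rw [tsum_congr hpt, Summable.tsum_sub (hsq'.add hsq) (hprod.mul_left 2), Summable.tsum_add hsq' hsq,
      tsum_mul_left]
  rw [hD, shift_sq_tsum hsum]
  ring

end Assembly
end PsiAux

namespace PsiAux
section Parts
variable {d : ℕ} [NeZero d] {π : Measure (EnvF d)} {u : Idx d → ℝ}

lemma int_X_psi (hπ : IsUniformProduct π) (hsum : Summable fun x : Fin d → ℤ => |u (some x)|)
    (z : Idx d) : ∫ ω, XF z ω * psiF u ω ∂π = u z := by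
  have e : (fun ω => XF z ω * psiF u ω) = fun ω => psiF u ω * XF z ω :=
    funext fun ω => mul_comm _ _
  rw [e]
  exact IpsiX hπ hsum z

lemma part_i (hπ : IsUniformProduct π) (hsum : Summable fun x : Fin d → ℤ => |u (some x)|)
    (hstar : u none = u (some 0)) :
    (∫ ω, ((ω none) 0 : ℝ) * psiF u ω ∂π) = u (some 0) := by
  have h := int_X_psi hπ hsum none
  rw [← hstar]
  exact h

lemma hCpsi_nonneg (hsum : Summable fun x : Fin d → ℤ => |u (some x)|) :
    (0:ℝ) ≤ (∑' x : Fin d → ℤ, |u (some x)|) + |u none| :=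
  add_nonneg (tsum_nonneg fun _ => abs_nonneg _) (abs_nonneg _)

lemma part_ii (hπ : IsUniformProduct π) (hsum : Summable fun x : Fin d → ℤ => |u (some x)|)
    (hstar : u none = u (some 0)) :
    (∫ ω, (psiF u ω) ^ 2 ∂π) = (∑' x : Fin d → ℤ, u (some x) ^ 2) + u (some 0) ^ 2 := by
  have e : (fun ω => (psiF u ω) ^ 2) = fun ω => psiF u ω * psiF u ω :=
    funext fun ω => pow_two _
  rw [e]
  have key := pairing hπ hsum XF (fun z => measXF z) (fun z ω h => XF_bound h z)
    (psiF u) (psi_aesm hπ hsum) (hCpsi_nonneg hsum) (psi_bound hsum)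
  calc ∫ ω, psiF u ω * psiF u ω ∂π
      = (∑' x : Fin d → ℤ, u (some x) * ∫ ω, XF (some x) ω * psiF u ω ∂π)
        + u none * ∫ ω, XF none ω * psiF u ω ∂π := key
  _ = (∑' x : Fin d → ℤ, u (some x) ^ 2) + u (some 0) ^ 2 := by
    have h1 : ∀ x : Fin d → ℤ, u (some x) * ∫ ω, XF (some x) ω * psiF u ω ∂π
        = u (some x) ^ 2 := by
      intro x
      rw [int_X_psi hπ hsum, pow_two]
    rw [tsum_congr h1, int_X_psi hπ hsum none, hstar, pow_two]

lemma part_iii (hπ : IsUniformProduct π) (hsum : Summable fun x : Fin d → ℤ => |u (some x)|)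
    (heven : ∀ x : Fin d → ℤ, u (some (-x)) = u (some x))
    (hstar : u none = u (some 0)) :
    (∫ ω, psiF u (swapMap (tauStar ω)) * psiF u ω ∂π)
      = (∑' x : Fin d → ℤ, u (some (x + E1 d)) * u (some x)) + u (some 0) ^ 2 := by
  have key := pairing hπ hsum TS (fun z => measTS z) (fun z ω h => TS_bound h z)
    (psiF u) (psi_aesm hπ hsum) (hCpsi_nonneg hsum) (psi_bound hsum)
  have hcomm : ∀ z : Idx d, (fun ω => TS z ω * psiF u ω) = fun ω => psiF u ω * TS z ω :=
    fun z => funext fun ω => mul_comm _ _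
  calc ∫ ω, psiF u (swapMap (tauStar ω)) * psiF u ω ∂π
      = (∑' x : Fin d → ℤ, u (some x) * ∫ ω, TS (some x) ω * psiF u ω ∂π)
        + u none * ∫ ω, TS none ω * psiF u ω ∂π := key
  _ = (∑' x : Fin d → ℤ, u (some x) * ∫ ω, psiF u ω * TS (some x) ω ∂π)
        + u none * ∫ ω, psiF u ω * TS none ω ∂π := by
      rw [hcomm none]
      refine congrArg₂ (· + ·) (tsum_congr fun x => ?_) rfl
      rw [hcomm (some x)]
  _ = (∑' x : Fin d → ℤ, u (some (x + E1 d)) * u (some x)) + u (some 0) ^ 2 := by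
    rw [IpsiTS_none hπ hsum]
    -- decompose the tsum
    set Mu := ∑' x : Fin d → ℤ, |u (some x)| with hMu
    have hIb : ∀ x : Fin d → ℤ, |∫ ω, psiF u ω * TS (some x) ω ∂π| ≤ Mu + Mu := by
      intro x
      by_cases hx : x = 0
      · subst hx
        rw [IpsiTS_some0 hπ hsum, hstar]
        have := habs hsum 0
        have : |u (some 0)| ≤ Mu := this
        have hM0 : (0:ℝ) ≤ Mu := tsum_nonneg fun _ => abs_nonneg _
        linarith [abs_nonneg (u (some 0))]
      · rw [IpsiTS_some hπ hsum hx]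
        have h1 := habs hsum (x + E1 d)
        have h2 := habs hsum (x - E1 d)
        have hM0 : (0:ℝ) ≤ Mu := tsum_nonneg fun _ => abs_nonneg _
        calc |u (some (x + E1 d)) * (1/2) + u (some (x - E1 d)) * (1/2)|
            ≤ |u (some (x + E1 d)) * (1/2)| + |u (some (x - E1 d)) * (1/2)| := abs_add_le _ _
        _ = |u (some (x + E1 d))| * (1/2) + |u (some (x - E1 d))| * (1/2) := by
            rw [abs_mul, abs_mul, abs_of_nonneg (by norm_num : (0:ℝ) ≤ 1/2)]
        _ ≤ Mu + Mu := by nlinarith [abs_nonneg (u (some (x + E1 d))), abs_nonneg (u (some (x - E1 d)))]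
    have hfs : Summable fun x : Fin d → ℤ =>
        u (some x) * ∫ ω, psiF u ω * TS (some x) ω ∂π := by
      apply Summable.of_abs
      refine Summable.of_nonneg_of_le (fun _ => abs_nonneg _) ?_ (hsum.mul_right (Mu + Mu))
      intro x
      rw [abs_mul]
      exact mul_le_mul_of_nonneg_left (hIb x) (abs_nonneg _)
    have splus := sum_shift hsum (E1 d)
    have sminus : Summable fun x : Fin d → ℤ => u (some x) * u (some (x - E1 d)) := by
      have := sum_shift hsum (-(E1 d))
      exact this.congr (fun x => by rw [sub_eq_add_neg])
    have s1 : Summable fun x : Fin d → ℤ => u (some x) * (u (some (x + E1 d)) * (1/2)) :=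
      (splus.mul_right (1/2)).congr (fun x => by ring)
    have s2 : Summable fun x : Fin d → ℤ => u (some x) * (u (some (x - E1 d)) * (1/2)) :=
      (sminus.mul_right (1/2)).congr (fun x => by ring)
    have sdelta : Summable fun x : Fin d → ℤ =>
        (if x = 0 then u (some 0) * u none
          - (u (some 0) * (u (some (0 + E1 d)) * (1/2))
            + u (some 0) * (u (some (0 - E1 d)) * (1/2))) else 0) := by
      apply summable_of_ne_finset_zero (s := {0})
      intro x hx
      rw [if_neg (by simpa using hx)]
    have hdecomp : ∀ x : Fin d → ℤ,
        u (some x) * ∫ ω, psiF u ω * TS (some x) ω ∂π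
          = (u (some x) * (u (some (x + E1 d)) * (1/2))
              + u (some x) * (u (some (x - E1 d)) * (1/2)))
            + (if x = 0 then u (some 0) * u none
                - (u (some 0) * (u (some (0 + E1 d)) * (1/2))
                  + u (some 0) * (u (some (0 - E1 d)) * (1/2))) else 0) := by
      intro x
      by_cases hx : x = 0
      · subst hx
        rw [if_pos rfl, IpsiTS_some0 hπ hsum]
        ring
      · rw [if_neg hx, IpsiTS_some hπ hsum hx, add_zero]
        ring
    have hdel : (∑' x : Fin d → ℤ,
        (if x = 0 then u (some 0) * u none
          - (u (some 0) * (u (some (0 + E1 d)) * (1/2))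
            + u (some 0) * (u (some (0 - E1 d)) * (1/2))) else 0))
        = u (some 0) * u none
          - (u (some 0) * (u (some (0 + E1 d)) * (1/2))
            + u (some 0) * (u (some (0 - E1 d)) * (1/2))) := by
      rw [tsum_eq_single (0 : Fin d → ℤ) (fun x hx => by rw [if_neg hx])]
      rw [if_pos rfl]
    rw [tsum_congr hdecomp, Summable.tsum_add (s1.add s2) sdelta, Summable.tsum_add s1 s2, hdel]
    -- identify the two shifted sums
    have hA1 : ∑' x : Fin d → ℤ, u (some x) * (u (some (x + E1 d)) * (1/2))
        = (∑' x : Fin d → ℤ, u (some (x + E1 d)) * u (some x)) * (1/2) := by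
      rw [← tsum_mul_right]
      exact tsum_congr fun x => by ring
    have hA2 : ∑' x : Fin d → ℤ, u (some x) * (u (some (x - E1 d)) * (1/2))
        = (∑' x : Fin d → ℤ, u (some (x + E1 d)) * u (some x)) * (1/2) := by
      have hneg : ∀ c : Fin d → ℤ, u (some (-c)) * (u (some (-c - E1 d)) * (1/2))
          = u (some (c + E1 d)) * u (some c) * (1/2) := by
        intro c
        have h1 : u (some (-c)) = u (some c) := heven c
        have h2 : (-c - E1 d) = -(c + E1 d) := by rw [neg_add, sub_eq_add_neg]
        rw [h1, h2, heven (c + E1 d)]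
        ring
      have he := (Equiv.neg (Fin d → ℤ)).tsum_eq
        (fun y : Fin d → ℤ => u (some y) * (u (some (y - E1 d)) * (1/2)))
      rw [← he]
      simp only [Equiv.neg_apply]
      rw [tsum_congr hneg, tsum_mul_right]
    rw [hA1, hA2]
    have h0p : (0 : Fin d → ℤ) + E1 d = E1 d := zero_add _
    have h0m : (0 : Fin d → ℤ) - E1 d = -E1 d := zero_sub _
    rw [h0p, h0m, hstar, heven (E1 d)]
    ring

end Parts
end PsiAux


/-- Computations for the linear functional `ψ` under the i.i.d. uniform measure on
`{−e₁,+e₁}`-valued environments: (i) `∫ ω(⋆)₁ ψ dπ = u(0)`;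
(ii) `∫ ψ² dπ = Σ_x u(x)² + u(0)²`; (iii) `∫ ψ(σ(τ_⋆ω)) ψ(ω) dπ(ω) =
Σ_x u(x+e₁)u(x) + u(0)²`, which equals `(Σ_x u(x)² + u(0)²) − ½ Σ_x (u(x+e₁) − u(x))²`. -/
theorem psi_computations (d : ℕ) [NeZero d]
    (π : Measure (EnvF d)) (hπ : IsUniformProduct π)
    (u : Option (Fin d → ℤ) → ℝ)
    (hsum : Summable fun x : Fin d → ℤ => |u (some x)|)
    (heven : ∀ x : Fin d → ℤ, u (some (-x)) = u (some x))
    (hstar : u none = u (some 0)) :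
    ((∫ ω, ((ω none) 0 : ℝ) * psiF u ω ∂π) = u (some 0)) ∧
    ((∫ ω, (psiF u ω) ^ 2 ∂π) = (∑' x : Fin d → ℤ, u (some x) ^ 2) + u (some 0) ^ 2) ∧
    ((∫ ω, psiF u (swapMap (tauStar ω)) * psiF u ω ∂π)
        = (∑' x : Fin d → ℤ, u (some (x + Pi.single (0 : Fin d) 1)) * u (some x))
          + u (some 0) ^ 2) ∧
    ((∑' x : Fin d → ℤ, u (some (x + Pi.single (0 : Fin d) 1)) * u (some x))
          + u (some 0) ^ 2
        = ((∑' x : Fin d → ℤ, u (some x) ^ 2) + u (some 0) ^ 2)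
          - (1 / 2) * ∑' x : Fin d → ℤ,
              (u (some (x + Pi.single (0 : Fin d) 1)) - u (some x)) ^ 2) := by
  have hE : (Pi.single (0 : Fin d) (1 : ℤ)) = PsiAux.E1 d := rfl
  refine ⟨PsiAux.part_i hπ hsum hstar, PsiAux.part_ii hπ hsum hstar, ?_, ?_⟩
  · rw [hE]
    exact PsiAux.part_iii hπ hsum heven hstar
  · rw [hE]
    exact PsiAux.part_iv hsum

end
end

section
/- Let u : ℤ^d_⋆ → ℝ satisfy Σ_{x ∈ ℤ^d} |u(x)| < ∞, u(−x) = u(x) for all x ∈ ℤ^d, and u(⋆) = u(0) = u(e₁) = u(−e₁). Then for every ω : ℤ^d_⋆ → {−e₁, +e₁}, ½ ψ(σ(τ_⋆ω)) − ½ ψ(τ_⋆^{−1}(σω)) = −¼ Σ_{x ∈ ℤ^d} (u(x + e₁) − u(x − e₁)) · (ω(0)₁ + ω(⋆)₁) · ω(x)₁. (This is the explicit form of the anti-symmetric part A applied to the linear functional ψ.) -/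
noncomputable section

/-- The inverse hand-shift `τ_⋆⁻¹`: `(τ_⋆⁻¹ω)(x) = ω(x − ω(⋆))`, `(τ_⋆⁻¹ω)(⋆) = ω(⋆)`. -/
def tauStarInv {d : ℕ} (ω : EnvF d) : EnvF d := fun z =>
  match z with
  | none => ω none
  | some x => ω (some (x - ω none))

/-- A real-valued summable-in-absolute-value family times a `±1`-valued family is summable. -/
lemma summable_mul_sign {ι : Type*} {g : ι → ℝ} (hg : Summable fun i => |g i|)
    {w : ι → ℝ} (hw : ∀ i, w i = 1 ∨ w i = -1) :
    Summable fun i => g i * w i := by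
  apply Summable.of_abs
  refine hg.congr fun i => ?_
  rw [abs_mul]
  rcases hw i with h | h <;> simp [h]

/-- tsum of a function modified at a single point. -/
lemma tsum_update_point {ι : Type*} [DecidableEq ι] {f g : ι → ℝ}
    (hf : Summable f) (hg : Summable g) (b : ι) (h : ∀ x, x ≠ b → f x = g x) :
    ∑' x, f x = f b - g b + ∑' x, g x := by
  rw [Summable.tsum_eq_add_tsum_ite hf b, Summable.tsum_eq_add_tsum_ite hg b]
  have heq : (∑' x, if x = b then (0:ℝ) else f x) = ∑' x, if x = b then (0:ℝ) else g x :=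
    tsum_congr fun x => by by_cases hx : x = b <;> simp [hx, h]
  rw [heq]; ring

/-- Explicit form of the anti-symmetric part applied to the linear functional `ψ`:
for `u` summable, even, with `u(⋆) = u(0) = u(e₁) = u(−e₁)`, and every
`ω ∈ {−e₁,+e₁}^{ℤ^d_⋆}`,
`½ψ(σ(τ_⋆ω)) − ½ψ(τ_⋆⁻¹(σω)) = −¼ Σ_x (u(x+e₁) − u(x−e₁))(ω(0)₁ + ω(⋆)₁)ω(x)₁`. -/
theorem antisymmetric_part_of_psi (d : ℕ) [NeZero d]
    (u : Option (Fin d → ℤ) → ℝ)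
    (hsum : Summable fun x : Fin d → ℤ => |u (some x)|)
    (heven : ∀ x : Fin d → ℤ, u (some (-x)) = u (some x))
    (hstar : u none = u (some 0))
    (hplus : u none = u (some (Pi.single (0 : Fin d) 1)))
    (hminus : u none = u (some (Pi.single (0 : Fin d) (-1))))
    (ω : EnvF d)
    (hω : ∀ z, ω z = Pi.single (0 : Fin d) (1 : ℤ) ∨ ω z = Pi.single (0 : Fin d) (-1 : ℤ)) :
    (1 / 2) * psiF u (swapMap (tauStar ω)) - (1 / 2) * psiF u (tauStarInv (swapMap ω))
      = -(1 / 4) * ∑' x : Fin d → ℤ,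
          (u (some (x + Pi.single (0 : Fin d) 1)) - u (some (x - Pi.single (0 : Fin d) 1)))
            * (((ω (some 0)) 0 : ℝ) + ((ω none) 0 : ℝ)) * ((ω (some x)) 0 : ℝ) := by
  classical
  set e1 : Fin d → ℤ := Pi.single (0 : Fin d) 1 with he1
  have hneg : Pi.single (0 : Fin d) (-1 : ℤ) = -e1 := by
    rw [he1, ← Pi.single_neg]
  set A : Fin d → ℤ := ω none with hAdef
  set B : Fin d → ℤ := ω (some 0) with hBdef
  set w : (Fin d → ℤ) → ℝ := fun x => ((ω (some x)) 0 : ℝ) with hwdef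
  have hw : ∀ x, w x = 1 ∨ w x = -1 := by
    intro x
    rcases hω (some x) with h | h
    · left; simp [hwdef, h, he1]
    · right; simp [hwdef, h, hneg, he1]
  have ha0 : ((ω none) 0 : ℝ) = 1 ∨ ((ω none) 0 : ℝ) = -1 := by
    rcases hω none with h | h
    · left; rw [h]; simp [he1]
    · right; rw [h]; simp [hneg, he1]
  have hAe : A = e1 ∨ A = -e1 := by
    rcases hω none with h | h
    · left; rw [hAdef, h]
    · right; rw [hAdef, h, hneg]
  have hBe : B = e1 ∨ B = -e1 := by
    rcases hω (some 0) with h | h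
    · left; rw [hBdef, h]
    · right; rw [hBdef, h, hneg]
  have huB : u (some B) = u none := by
    rcases hBe with h | h
    · rw [h, he1]; exact hplus.symm
    · rw [h, ← hneg]; exact hminus.symm
  -- summability facts
  have habs_sub : ∀ v : Fin d → ℤ, Summable fun y : Fin d → ℤ => |u (some (y - v))| := by
    intro v
    have h : Summable ((fun x : Fin d → ℤ => |u (some x)|) ∘ (Equiv.subRight v)) :=
      (Equiv.summable_iff _).2 hsum
    simpa [Function.comp_def] using h
  have habs_add : ∀ v : Fin d → ℤ, Summable fun y : Fin d → ℤ => |u (some (y + v))| := by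
    intro v
    have h : Summable ((fun x : Fin d → ℤ => |u (some x)|) ∘ (Equiv.addRight v)) :=
      (Equiv.summable_iff _).2 hsum
    simpa [Function.comp_def] using h
  have hS1sum : Summable fun y : Fin d → ℤ => u (some (y - A)) * w y :=
    summable_mul_sign (habs_sub A) hw
  have hS2sum : Summable fun y : Fin d → ℤ => u (some (y + B)) * w y :=
    summable_mul_sign (habs_add B) hw
  have hg1 : Summable fun x : Fin d → ℤ => u (some x) * w (x + A) :=
    summable_mul_sign hsum (fun x => hw (x + A))
  have hg2 : Summable fun x : Fin d → ℤ => u (some x) * w (x - B) :=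
    summable_mul_sign hsum (fun x => hw (x - B))
  have hF1 : Summable fun x : Fin d → ℤ =>
      u (some x) * (if x = 0 then ((ω none) 0 : ℝ) else w (x + A)) :=
    summable_mul_sign hsum (fun x => by
      by_cases hx : x = 0
      · simp only [if_pos hx]; exact ha0
      · simp only [if_neg hx]; exact hw _)
  have hF2 : Summable fun x : Fin d → ℤ =>
      u (some x) * (if x = B then ((ω none) 0 : ℝ) else w (x - B)) :=
    summable_mul_sign hsum (fun x => by
      by_cases hx : x = B
      · simp only [if_pos hx]; exact ha0
      · simp only [if_neg hx]; exact hw _)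
  -- reindexing
  have hS1 : (∑' x : Fin d → ℤ, u (some x) * w (x + A))
      = ∑' y : Fin d → ℤ, u (some (y - A)) * w y := by
    rw [← Equiv.tsum_eq (Equiv.subRight A) (fun x => u (some x) * w (x + A))]
    exact tsum_congr fun y => by simp
  have hS2 : (∑' x : Fin d → ℤ, u (some x) * w (x - B))
      = ∑' y : Fin d → ℤ, u (some (y + B)) * w y := by
    rw [← Equiv.tsum_eq (Equiv.addRight B) (fun x => u (some x) * w (x - B))]
    exact tsum_congr fun y => by simp
  -- psi1
  have hψ1 : psiF u (swapMap (tauStar ω))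
      = u none * ((ω none) 0 : ℝ) + ∑' y : Fin d → ℤ, u (some (y - A)) * w y := by
    unfold psiF
    have hstar1 : ((swapMap (tauStar ω) none) 0 : ℝ) = w A := by
      simp [swapMap, tauStar, hwdef, hAdef]
    have hpt1 : ∀ x : Fin d → ℤ, u (some x) * ((swapMap (tauStar ω) (some x)) 0 : ℝ)
        = u (some x) * (if x = 0 then ((ω none) 0 : ℝ) else w (x + A)) := by
      intro x
      by_cases hx : x = 0 <;> simp [swapMap, tauStar, hx, hwdef, hAdef]
    rw [hstar1, tsum_congr hpt1, tsum_update_point hF1 hg1 0 (fun x hx => by simp [hx]), hS1]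
    rw [if_pos rfl, zero_add, ← hstar]
    ring
  -- psi2
  have hψ2 : psiF u (tauStarInv (swapMap ω))
      = u none * ((ω none) 0 : ℝ) + ∑' y : Fin d → ℤ, u (some (y + B)) * w y := by
    unfold psiF
    have hstar2 : ((tauStarInv (swapMap ω) none) 0 : ℝ) = w 0 := by
      simp [tauStarInv, swapMap, hwdef, hBdef]
    have hpt2 : ∀ x : Fin d → ℤ, u (some x) * ((tauStarInv (swapMap ω) (some x)) 0 : ℝ)
        = u (some x) * (if x = B then ((ω none) 0 : ℝ) else w (x - B)) := by
      intro x
      by_cases hx : x = B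
      · simp [tauStarInv, swapMap, hx, sub_self, hwdef, hAdef, hBdef]
      · have hx' : x - B ≠ 0 := sub_ne_zero.mpr hx
        simp [tauStarInv, swapMap, hx, hx', hwdef, ← hBdef]
    rw [hstar2, tsum_congr hpt2, tsum_update_point hF2 hg2 B (fun x hx => by simp [hx]), hS2]
    rw [if_pos rfl, sub_self, huB]
    ring
  -- pointwise identity
  have hecast : ((e1 0 : ℤ) : ℝ) = 1 := by simp [he1]
  have hncast : (((-e1) 0 : ℤ) : ℝ) = -1 := by simp [he1]
  have hconv : ∀ y : Fin d → ℤ,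
      (1/2 : ℝ) * (u (some (y - A)) * w y) - (1/2) * (u (some (y + B)) * w y)
      = -(1/4) * ((u (some (y + e1)) - u (some (y - e1)))
          * (((B 0 : ℤ) : ℝ) + ((A 0 : ℤ) : ℝ)) * w y) := by
    intro y
    rcases hAe with hA' | hA' <;> rcases hBe with hB' | hB'
    · rw [hA', hB', hecast]; ring
    · rw [hA', hB', hecast, hncast, ← sub_eq_add_neg]; ring
    · rw [hA', hB', hecast, hncast, sub_neg_eq_add]; ring
    · rw [hA', hB', hncast, sub_neg_eq_add, ← sub_eq_add_neg]; ring
  -- assemble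
  have step1 : (∑' y : Fin d → ℤ,
      ((1/2 : ℝ) * (u (some (y - A)) * w y) - (1/2) * (u (some (y + B)) * w y)))
      = (1/2) * (∑' y : Fin d → ℤ, u (some (y - A)) * w y)
        - (1/2) * (∑' y : Fin d → ℤ, u (some (y + B)) * w y) := by
    rw [Summable.tsum_sub (hS1sum.mul_left (1/2)) (hS2sum.mul_left (1/2)), tsum_mul_left, tsum_mul_left]
  have hfinal : (1/2 : ℝ) * (∑' y : Fin d → ℤ, u (some (y - A)) * w y)
      - (1/2) * (∑' y : Fin d → ℤ, u (some (y + B)) * w y)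
      = -(1/4) * ∑' x : Fin d → ℤ,
          (u (some (x + e1)) - u (some (x - e1)))
            * (((B 0 : ℤ) : ℝ) + ((A 0 : ℤ) : ℝ)) * w x := by
    rw [← step1, tsum_congr hconv, tsum_mul_left]
  have expand : ∀ a b c : ℝ, (1/2) * (a + b) - (1/2) * (a + c) = (1/2) * b - (1/2) * c := by
    intro a b c; ring
  rw [hψ1, hψ2, expand]
  exact hfinal

end
end
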